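/- Let ψ : (0,∞) → ℝ and let α : (0,∞) → ℝ be differentiable and satisfy the compatibility ODE α'(t) = ψ(t) α(t) (1/t + α(t)²) − α(t)/t − α(t)³/2 for all t > 0. Define Q(x,t) = (π√t)^{−1} e^{−x²/(2t)} Φ(α(t) x) for x ∈ ℝ, t > 0, where Φ(u) = ∫_{−∞}^{u} e^{−s²/2} ds. Then Q satisfies the Kolmogorov forward equation ∂_t Q(x,t) = −∂_x [ ψ(t) (∂_x log Φ(α(t)x)) Q(x,t) ] + (1/2) ∂_{xx} Q(x,t) for all x ∈ ℝ and t > 0. -/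

import Mathlib

/-- Unnormalized Gaussian cumulative integral: `Φ u = ∫_{-∞}^u e^{-s²/2} ds`. -/
noncomputable def Phi (u : ℝ) : ℝ := ∫ s in Set.Iic u, Real.exp (-s ^ 2 / 2)

/-- The skew-Normal density with time-dependent skewness `α(t)`:
`Q(x,t) = (π√t)⁻¹ e^{-x²/(2t)} Φ(α(t) x)`. -/
noncomputable def Q (α : ℝ → ℝ) (t x : ℝ) : ℝ :=
  (Real.pi * Real.sqrt t)⁻¹ * Real.exp (-x ^ 2 / (2 * t)) * Phi (α t * x)


open MeasureTheory Real

lemma integrable_gauss : MeasureTheory.Integrable (fun s : ℝ => Real.exp (-s ^ 2 / 2)) := by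
  have h := integrable_exp_neg_mul_sq (by norm_num : (0:ℝ) < 1/2)
  convert h using 2 with s
  ring_nf

lemma phi_pos (u : ℝ) : 0 < Phi u := by
  unfold Phi
  rw [setIntegral_pos_iff_support_of_nonneg_ae]
  · have : (Function.support fun s : ℝ => Real.exp (-s ^ 2 / 2)) = Set.univ := by
      ext s; simp [Function.support, Real.exp_ne_zero]
    rw [this]
    simp
  · exact Filter.Eventually.of_forall fun s => (Real.exp_pos _).le
  · exact integrable_gauss.integrableOn

lemma hasDerivAt_Phi (u : ℝ) : HasDerivAt Phi (Real.exp (-u ^ 2 / 2)) u := by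
  have key : Phi = fun v => Phi 0 + ∫ s in (0:ℝ)..v, Real.exp (-s ^ 2 / 2) := by
    funext v
    rw [← intervalIntegral.integral_Iic_sub_Iic integrable_gauss.integrableOn
      integrable_gauss.integrableOn]
    unfold Phi; ring
  rw [key]
  have hc : Continuous fun s : ℝ => Real.exp (-s ^ 2 / 2) := by continuity
  exact ((intervalIntegral.integral_hasDerivAt_right
    integrable_gauss.intervalIntegrable
    hc.aestronglyMeasurable.stronglyMeasurableAtFilter hc.continuousAt).const_add _)

section helpers

variable (a t : ℝ)

lemma hEy (ht : t ≠ 0) (y : ℝ) :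
    HasDerivAt (fun y' : ℝ => Real.exp (-y' ^ 2 / (2 * t)))
      (-(y / t) * Real.exp (-y ^ 2 / (2 * t))) y := by
  have h : HasDerivAt (fun y' : ℝ => -y' ^ 2 / (2 * t))
      (-((2 : ℕ) * y ^ (2 - 1)) / (2 * t)) y := ((hasDerivAt_pow 2 y).neg).div_const (2 * t)
  have := h.exp
  convert this using 1
  field_simp
  ring

lemma hGy (y : ℝ) :
    HasDerivAt (fun y' : ℝ => Real.exp (-(a * y') ^ 2 / 2))
      (-(a ^ 2 * y) * Real.exp (-(a * y) ^ 2 / 2)) y := by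
  have hm : HasDerivAt (fun y' : ℝ => a * y') a y := by
    simpa using (hasDerivAt_id y).const_mul a
  have h : HasDerivAt (fun y' : ℝ => -(a * y') ^ 2 / 2)
      (-((2 : ℕ) * (a * y) ^ (2 - 1) * a) / 2) y := ((hm.pow 2).neg).div_const 2
  have := h.exp
  convert this using 1
  ring

lemma hFy (y : ℝ) :
    HasDerivAt (fun y' : ℝ => Phi (a * y'))
      (a * Real.exp (-(a * y) ^ 2 / 2)) y := by
  have hm : HasDerivAt (fun y' : ℝ => a * y') a y := by
    simpa using (hasDerivAt_id y).const_mul a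
  have := (hasDerivAt_Phi (a * y)).comp y hm
  exact this.congr_deriv (mul_comm _ _)

end helpers

/-- Theorem 3: if the drift amplitude `ψ` and the skewness `α` satisfy the compatibility
ODE `α' = ψ α (1/t + α²) - α/t - α³/2` on `(0,∞)`, then the skew-Normal density
`Q(x,t) = (π√t)⁻¹ e^{-x²/(2t)} Φ(α(t)x)` solves the Kolmogorov forward equation
`∂_t Q = -∂_x [ψ(t) (∂_x log Φ(α(t)x)) Q] + (1/2) ∂_{xx} Q`. -/
theorem stmt_8 (ψ α : ℝ → ℝ)
    (hα : ∀ t > (0 : ℝ), DifferentiableAt ℝ α t)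
    (hode : ∀ t > (0 : ℝ),
      deriv α t = ψ t * α t * (1 / t + (α t) ^ 2) - α t / t - (α t) ^ 3 / 2) :
    ∀ (x : ℝ), ∀ t > (0 : ℝ),
      deriv (fun τ => Q α τ x) t
        = - deriv (fun y =>
              ψ t * deriv (fun z => Real.log (Phi (α t * z))) y * Q α t y) x
          + (1 / 2) * deriv (deriv (fun y => Q α t y)) x := by
  intro x t ht
  set a := α t with ha
  have hsq : Real.sqrt t ^ 2 = t := Real.sq_sqrt ht.le
  have hst : 0 < Real.sqrt t := Real.sqrt_pos.2 ht
  set c := (Real.pi * Real.sqrt t)⁻¹ with hc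
  -- time derivative
  have hS : HasDerivAt (fun τ => Real.pi * Real.sqrt τ)
      (Real.pi * (1 / (2 * Real.sqrt t))) t :=
    (Real.hasDerivAt_sqrt ht.ne').const_mul Real.pi
  have hC : HasDerivAt (fun τ => (Real.pi * Real.sqrt τ)⁻¹)
      (-(Real.pi * (1 / (2 * Real.sqrt t))) / (Real.pi * Real.sqrt t) ^ 2) t :=
    hS.inv (by positivity)
  have h2τ : HasDerivAt (fun τ : ℝ => 2 * τ) 2 t := by
    simpa using (hasDerivAt_id t).const_mul 2
  have hEt : HasDerivAt (fun τ : ℝ => Real.exp (-x ^ 2 / (2 * τ)))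
      ((0 * (2 * t) - -x ^ 2 * 2) / (2 * t) ^ 2 * Real.exp (-x ^ 2 / (2 * t))) t := by
    have h : HasDerivAt (fun τ : ℝ => -x ^ 2 / (2 * τ))
        ((0 * (2 * t) - -x ^ 2 * 2) / (2 * t) ^ 2) t :=
      (hasDerivAt_const t (-x ^ 2)).div h2τ (by positivity)
    simpa [mul_comm] using h.exp
  have hPt : HasDerivAt (fun τ => Phi (α τ * x))
      (Real.exp (-(a * x) ^ 2 / 2) * (deriv α t * x)) t :=
    by have := (hasDerivAt_Phi (a * x)).comp t ((hα t ht).hasDerivAt.mul_const x); exact this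
  have hQt : HasDerivAt (fun τ => Q α τ x)
      ((-(Real.pi * (1 / (2 * Real.sqrt t))) / (Real.pi * Real.sqrt t) ^ 2
          * Real.exp (-x ^ 2 / (2 * t))
        + c * ((0 * (2 * t) - -x ^ 2 * 2) / (2 * t) ^ 2 * Real.exp (-x ^ 2 / (2 * t))))
          * Phi (a * x)
        + c * Real.exp (-x ^ 2 / (2 * t))
          * (Real.exp (-(a * x) ^ 2 / 2) * (deriv α t * x))) t := by
    have := (hC.mul hEt).mul hPt
    simpa [Q, hc, Pi.mul_def, ← ha] using this
  -- drift simplification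
  have hdrift : (fun y => ψ t * deriv (fun z => Real.log (Phi (α t * z))) y * Q α t y)
      = fun y => ψ t * c * a
          * (Real.exp (-y ^ 2 / (2 * t)) * Real.exp (-(a * y) ^ 2 / 2)) := by
    funext y
    have hlog : HasDerivAt (fun z => Real.log (Phi (a * z)))
        (a * Real.exp (-(a * y) ^ 2 / 2) / Phi (a * y)) y :=
      (hFy a y).log (phi_pos _).ne'
    rw [← ha, hlog.deriv]
    simp only [Q, ← ha, ← hc]
    field_simp [(phi_pos (a * y)).ne']
  -- first spatial derivative
  have hQ1 : deriv (fun y => Q α t y)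
      = fun y => c * (-(y / t) * Real.exp (-y ^ 2 / (2 * t)) * Phi (a * y)
          + a * Real.exp (-y ^ 2 / (2 * t)) * Real.exp (-(a * y) ^ 2 / 2)) := by
    funext y
    have h := ((hEy t ht.ne' y).const_mul c).mul (hFy a y)
    have h2 : HasDerivAt (fun y' => Q α t y')
        (c * (-(y / t) * Real.exp (-y ^ 2 / (2 * t))) * Phi (a * y)
          + c * Real.exp (-y ^ 2 / (2 * t)) * (a * Real.exp (-(a * y) ^ 2 / 2))) y := by
      simpa [Q, ← ha, ← hc, Pi.mul_def] using h
    rw [h2.deriv]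
    ring
  -- second spatial derivative
  have h1 : HasDerivAt (fun y : ℝ => -(y / t)) (-(1 / t)) x := by
    simpa [Pi.neg_def] using ((hasDerivAt_id x).div_const t).neg
  have hterm1 := (h1.mul (hEy t ht.ne' x)).mul (hFy a x)
  have hterm2 := ((hEy t ht.ne' x).const_mul a).mul (hGy a x)
  have hQ2 : HasDerivAt (fun y => c * (-(y / t) * Real.exp (-y ^ 2 / (2 * t)) * Phi (a * y)
          + a * Real.exp (-y ^ 2 / (2 * t)) * Real.exp (-(a * y) ^ 2 / 2)))
      (c * (((-(1 / t) * Real.exp (-x ^ 2 / (2 * t))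
            + -(x / t) * (-(x / t) * Real.exp (-x ^ 2 / (2 * t)))) * Phi (a * x)
          + -(x / t) * Real.exp (-x ^ 2 / (2 * t)) * (a * Real.exp (-(a * x) ^ 2 / 2)))
        + (a * (-(x / t) * Real.exp (-x ^ 2 / (2 * t))) * Real.exp (-(a * x) ^ 2 / 2)
          + a * Real.exp (-x ^ 2 / (2 * t)) * (-(a ^ 2 * x) * Real.exp (-(a * x) ^ 2 / 2))))) x :=
    (hterm1.add hterm2).const_mul c
  -- drift derivative
  have hD : HasDerivAt (fun y => ψ t * c * a
        * (Real.exp (-y ^ 2 / (2 * t)) * Real.exp (-(a * y) ^ 2 / 2)))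
      (ψ t * c * a * (-(x / t) * Real.exp (-x ^ 2 / (2 * t)) * Real.exp (-(a * x) ^ 2 / 2)
        + Real.exp (-x ^ 2 / (2 * t)) * (-(a ^ 2 * x) * Real.exp (-(a * x) ^ 2 / 2)))) x :=
    by
    have h := ((hEy t ht.ne' x).mul (hGy a x)).const_mul (ψ t * c * a)
    exact h
  -- assemble
  rw [hQt.deriv, hdrift, hD.deriv, hQ1, hQ2.deriv, hode t ht, ← ha]
  have hπ := Real.pi_ne_zero
  field_simp [hc]
  ring_nf
  linear_combination (t * Real.sqrt t ^ 2 * Phi (x * a) * (Real.sqrt t * (Real.sqrt t)⁻¹))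
      * mul_inv_cancel₀ hπ + (t * Real.sqrt t ^ 2 * Phi (x * a)) * mul_inv_cancel₀ hst.ne'
    + (t * Phi (x * a)) * hsq
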